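/- arXiv:2604.04144 — 4 statements merged into one kernel-verified Lean document; each statement's English description precedes it below -/
import Mathlib

section
/- Let μ, α ∈ (0,1], let v' ∈ B_d, and let w' ∈ ℝ^d be a nonnegative vector such that for every coordinate i: v'_i ≤ w'_i, and either w'_i ≤ v'_i + α or w'_i ≤ (1 + μ)·v'_i. Define w = w'/‖w'‖₁ and v = v'/‖v'‖₁. Then for every coordinate i, |w_i − v_i| ≤ μ·v_i + d·α. -/
/-- The ℓ¹ norm of a vector in ℝ^d. -/
noncomputable def l1norm {d : ℕ} (x : Fin d → ℝ) : ℝ := ∑ i, |x i|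

/-- The ℓ^∞ norm of a vector in ℝ^d (for d ≥ 1 this is the max of the |x i|). -/
noncomputable def linfnorm {d : ℕ} (x : Fin d → ℝ) : ℝ := ⨆ i, |x i|

/-- Membership in B_d: nonnegative vectors with largest entry equal to 1. -/
def inB {d : ℕ} (w : Fin d → ℝ) : Prop := (∀ i, 0 ≤ w i) ∧ linfnorm w = 1

lemma aux_stmt3 (μ α D V W a b : ℝ) (hμ : 0 < μ) (hα : 0 < α) (hD : 1 ≤ D)
    (hV : 1 ≤ V) (hVW : V ≤ W) (ha : 0 ≤ a) (hab : a ≤ b)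
    (haV : a ≤ V) (hbW : b ≤ W)
    (hb : b ≤ a + μ * a + α) (hW : W ≤ V + μ * V + D * α) :
    |b / W - a / V| ≤ μ * (a / V) + D * α := by
  have hV0 : (0:ℝ) < V := lt_of_lt_of_le one_pos hV
  have hW0 : (0:ℝ) < W := lt_of_lt_of_le hV0 hVW
  have hW1 : (1:ℝ) ≤ W := hV.trans hVW
  have e1 : b / W - a / V = (b * V - a * W) / (V * W) := by
    field_simp
  have e2 : μ * (a / V) + D * α = ((μ * a + D * α * V) * W) / (V * W) := by
    field_simp
  rw [e1, e2, abs_div, abs_of_pos (by positivity : (0:ℝ) < V * W), div_le_div_iff_of_pos_right (by positivity : (0:ℝ) < V * W), abs_le]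
  constructor
  · -- a*W - b*V ≤ (μ*a + D*α*V)*W
    nlinarith [mul_le_mul_of_nonneg_left hW ha,
      mul_le_mul_of_nonneg_left hVW (mul_nonneg hμ.le ha),
      mul_le_mul_of_nonneg_left haV (mul_nonneg hα.le (by linarith : (0:ℝ) ≤ D)),
      mul_le_mul_of_nonneg_left hW1 (mul_nonneg (mul_nonneg hα.le (by linarith : (0:ℝ) ≤ D)) hV0.le),
      mul_le_mul_of_nonneg_right hab hV0.le]
  · -- b*V - a*W ≤ (μ*a + D*α*V)*W
    nlinarith [mul_le_mul_of_nonneg_right hb hV0.le,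
      mul_le_mul_of_nonneg_left hVW (mul_nonneg hμ.le ha),
      mul_nonneg (mul_nonneg hα.le hV0.le) (by nlinarith : (0:ℝ) ≤ D * W - 1),
      mul_le_mul_of_nonneg_right hVW ha]

theorem stmt_3 {d : ℕ} (hd : 1 ≤ d)
    (μ α : ℝ) (hμ : 0 < μ ∧ μ ≤ 1) (hα : 0 < α ∧ α ≤ 1)
    (v' w' : Fin d → ℝ) (hv' : inB v') (hw' : ∀ i, 0 ≤ w' i)
    (h : ∀ i, v' i ≤ w' i ∧ (w' i ≤ v' i + α ∨ w' i ≤ (1 + μ) * v' i)) :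
    ∀ i, |w' i / l1norm w' - v' i / l1norm v'| ≤ μ * (v' i / l1norm v') + d * α := by
  intro i
  have hne : Nonempty (Fin d) := ⟨⟨0, hd⟩⟩
  obtain ⟨hv0, hsup⟩ := hv'
  have hVdef : l1norm v' = ∑ j, v' j := by
    unfold l1norm; exact Finset.sum_congr rfl fun j _ => abs_of_nonneg (hv0 j)
  have hWdef : l1norm w' = ∑ j, w' j := by
    unfold l1norm; exact Finset.sum_congr rfl fun j _ => abs_of_nonneg (hw' j)
  set V := l1norm v' with hVd
  set W := l1norm w' with hWd
  have hV1 : 1 ≤ V := by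
    rw [← hsup]
    apply ciSup_le
    intro j
    rw [abs_of_nonneg (hv0 j), hVdef]
    exact Finset.single_le_sum (fun k _ => hv0 k) (Finset.mem_univ j)
  have hVW : V ≤ W := by
    rw [hVdef, hWdef]
    exact Finset.sum_le_sum fun j _ => (h j).1
  have haV : v' i ≤ V := by
    rw [hVdef]
    exact Finset.single_le_sum (fun k _ => hv0 k) (Finset.mem_univ i)
  have hbW : w' i ≤ W := by
    rw [hWdef]
    exact Finset.single_le_sum (fun k _ => hw' k) (Finset.mem_univ i)
  have hb : w' i ≤ v' i + μ * v' i + α := by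
    rcases (h i).2 with h1 | h1
    · nlinarith [mul_nonneg hμ.1.le (hv0 i)]
    · nlinarith [hα.1]
  have hW : W ≤ V + μ * V + (d : ℝ) * α := by
    rw [hWdef]
    calc ∑ j, w' j ≤ ∑ j, (v' j + μ * v' j + α) := by
          apply Finset.sum_le_sum
          intro j _
          rcases (h j).2 with h1 | h1
          · nlinarith [mul_nonneg hμ.1.le (hv0 j)]
          · nlinarith [hα.1]
      _ = V + μ * V + (d : ℝ) * α := by
          rw [hVdef]
          simp [Finset.sum_add_distrib, Finset.mul_sum, Finset.card_univ]
  have hD : (1 : ℝ) ≤ (d : ℝ) := by exact_mod_cast hd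
  exact aux_stmt3 μ α d V W (v' i) (w' i) hμ.1 hα.1 hD hV1 hVW (hv0 i) (h i).1 haV hbW hb hW
end

section
/- For every v' ∈ B_d there exists w' ∈ W' such that for every coordinate i: v'_i ≤ w'_i, and if v'_i ≤ α then w'_i ≤ v'_i + α, while if v'_i ≥ α then w'_i ≤ (1 + μ)·v'_i. -/
/-- The one-dimensional grid G = {0} ∪ {α·(1+μ)^k : k = 0, 1, …, N}. -/
def gridG (μ α : ℝ) (N : ℕ) : Set ℝ := {0} ∪ {x | ∃ k ≤ N, x = α * (1 + μ) ^ k}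

/-- W' = W'_1 ∪ … ∪ W'_d, where W'_i fixes coordinate i to 1 and
all other coordinates come from the one-dimensional grid. -/
def Wgrid (d : ℕ) (μ α : ℝ) (N : ℕ) : Set (Fin d → ℝ) :=
  ⋃ i : Fin d, {w' | w' i = 1 ∧ ∀ j, j ≠ i → w' j ∈ gridG μ α N}

theorem stmt_8 {d : ℕ} (hd : 1 ≤ d)
    (μ α : ℝ) (hμ : 0 < μ ∧ μ ≤ 1) (hα : 0 < α ∧ α ≤ 1)
    (N : ℕ) (hN : α * (1 + μ) ^ N = 1)
    (v' : Fin d → ℝ) (hv' : inB v') :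
    ∃ w' ∈ Wgrid d μ α N, ∀ i, v' i ≤ w' i ∧
      (v' i ≤ α → w' i ≤ v' i + α) ∧ (α ≤ v' i → w' i ≤ (1 + μ) * v' i) := by
  classical
  haveI hne : Nonempty (Fin d) := Fin.pos_iff_nonempty.mp hd
  obtain ⟨hv0, hvn⟩ := hv'
  have hbdd : BddAbove (Set.range fun i => |v' i|) := Set.Finite.bddAbove (Set.finite_range _)
  have hb : ∀ j, v' j ≤ 1 := by
    intro j
    calc v' j ≤ |v' j| := le_abs_self _
    _ ≤ ⨆ i, |v' i| := le_ciSup hbdd j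
    _ = 1 := hvn
  -- index where max is attained
  obtain ⟨i0, hi0⟩ := Finite.exists_max (fun i => |v' i|)
  have hvi0 : v' i0 = 1 := by
    have h1 : (⨆ i, |v' i|) ≤ |v' i0| := ciSup_le hi0
    have h2 : |v' i0| ≤ ⨆ i, |v' i| := le_ciSup hbdd i0
    have : |v' i0| = 1 := le_antisymm (hvn ▸ h2) (hvn ▸ h1)
    rwa [abs_of_nonneg (hv0 i0)] at this
  have hPex : ∀ j, ∃ k, v' j ≤ α * (1 + μ) ^ k := fun j => ⟨N, by rw [hN]; exact hb j⟩
  set K : Fin d → ℕ := fun j => Nat.find (hPex j) with hKdef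
  have hK_le : ∀ j, K j ≤ N := fun j => Nat.find_le (by rw [hN]; exact hb j)
  have hKspec : ∀ j, v' j ≤ α * (1 + μ) ^ (K j) := fun j => Nat.find_spec (hPex j)
  have hKmin : ∀ j k, k < K j → ¬ (v' j ≤ α * (1 + μ) ^ k) := fun j k hk => Nat.find_min (hPex j) hk
  set w' : Fin d → ℝ := fun j =>
    if j = i0 then 1 else if v' j ≤ α then α else α * (1 + μ) ^ (K j) with hw'
  refine ⟨w', ?_, ?_⟩
  · refine Set.mem_iUnion.mpr ⟨i0, ?_, ?_⟩
    · simp [hw']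
    · intro j hj
      simp only [hw', if_neg hj]
      by_cases hja : v' j ≤ α
      · rw [if_pos hja]
        exact Or.inr ⟨0, Nat.zero_le _, by ring⟩
      · rw [if_neg hja]
        exact Or.inr ⟨K j, hK_le j, rfl⟩
  · intro i
    by_cases hi : i = i0
    · subst hi
      simp only [hw', if_pos rfl, hvi0]
      refine ⟨le_refl _, fun _ => by linarith [hα.1], fun _ => by nlinarith [hμ.1]⟩
    · simp only [hw', if_neg hi]
      by_cases hia : v' i ≤ α
      · rw [if_pos hia]
        exact ⟨hia, fun _ => by linarith [hv0 i], fun h => by nlinarith [hμ.1, hα.1]⟩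
      · rw [if_neg hia]
        push_neg at hia
        have hK0 : K i ≠ 0 := by
          intro h0
          have := hKspec i
          rw [h0] at this
          simp at this
          linarith
        have hpred : K i - 1 < K i := Nat.pred_lt hK0
        have hlt : α * (1 + μ) ^ (K i - 1) < v' i := by
          have := hKmin i (K i - 1) hpred
          linarith [not_le.mp this]
        have hsucc : K i = (K i - 1) + 1 := (Nat.succ_pred_eq_of_pos (Nat.pos_of_ne_zero hK0)).symm
        refine ⟨hKspec i, fun h => absurd (le_antisymm h (le_of_lt hia)).symm (by linarith), fun _ => ?_⟩
        rw [hsucc, pow_succ]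
        nlinarith [hμ.1]
end

section
/- For every weight vector v ∈ Δ_d there exists w ∈ W such that |w_i − v_i| ≤ μ·v_i + d·α for every coordinate i. -/
/-- Membership in the probability simplex Δ_d. -/
def inSimplex {d : ℕ} (w : Fin d → ℝ) : Prop := (∀ i, 0 ≤ w i) ∧ ∑ i, w i = 1

/-- W = {w'/‖w'‖₁ : w' ∈ W'}, the projection of the grid onto the simplex. -/
noncomputable def Wnorm (d : ℕ) (μ α : ℝ) (N : ℕ) : Set (Fin d → ℝ) :=
  {w | ∃ w' ∈ Wgrid d μ α N, w = fun i => w' i / l1norm w'}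

/-- One-dimensional rounding-up lemma. -/
lemma grid_approx (μ α : ℝ) (hμ : 0 < μ) (hα : 0 < α) (N : ℕ)
    (hN : α * (1 + μ) ^ N = 1) (x : ℝ) (hx0 : 0 ≤ x) (hx1 : x ≤ 1) :
    ∃ g ∈ gridG μ α N, x ≤ g ∧ g ≤ (1 + μ) * x + α := by
  classical
  rcases eq_or_lt_of_le hx0 with h0 | h0
  · exact ⟨0, Or.inl rfl, le_of_eq h0.symm, by nlinarith⟩
  · have hPN : x ≤ α * (1 + μ) ^ N := by rw [hN]; exact hx1
    have hex : ∃ k, x ≤ α * (1 + μ) ^ k := ⟨N, hPN⟩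
    set k := Nat.find hex with hk
    have hkN : k ≤ N := Nat.find_le hPN
    have hspec : x ≤ α * (1 + μ) ^ k := Nat.find_spec hex
    refine ⟨α * (1 + μ) ^ k, Or.inr ⟨k, hkN, rfl⟩, hspec, ?_⟩
    rcases Nat.eq_zero_or_pos k with hk0 | hkpos
    · rw [hk0]; simp; nlinarith
    · obtain ⟨m, hm⟩ := Nat.exists_eq_succ_of_ne_zero hkpos.ne'
      have hmlt : m < k := hm ▸ Nat.lt_succ_self m
      have hmin : ¬ x ≤ α * (1 + μ) ^ m := Nat.find_min hex hmlt
      push_neg at hmin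
      rw [hm]
      have : α * (1 + μ) ^ (m + 1) = (1 + μ) * (α * (1 + μ) ^ m) := by ring
      rw [this]
      nlinarith

theorem stmt_9 {d : ℕ} (hd : 1 ≤ d)
    (μ α : ℝ) (hμ : 0 < μ ∧ μ ≤ 1) (hα : 0 < α ∧ α ≤ 1)
    (N : ℕ) (hN : α * (1 + μ) ^ N = 1)
    (v : Fin d → ℝ) (hv : inSimplex v) :
    ∃ w ∈ Wnorm d μ α N, ∀ i, |w i - v i| ≤ μ * v i + d * α := by
  classical
  obtain ⟨hμ0, hμ1⟩ := hμ
  obtain ⟨hα0, hα1⟩ := hα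
  obtain ⟨hvnn, hvsum⟩ := hv
  have hdpos : 0 < d := hd
  have hne : (Finset.univ : Finset (Fin d)).Nonempty := by
    have : Nonempty (Fin d) := ⟨⟨0, hdpos⟩⟩
    exact Finset.univ_nonempty
  obtain ⟨i0, -, hi0⟩ := Finset.exists_max_image Finset.univ v hne
  have hi0' : ∀ j, v j ≤ v i0 := fun j => hi0 j (Finset.mem_univ j)
  set V := v i0 with hV
  have hV0 : 0 < V := by
    by_contra h
    push_neg at h
    have : ∑ j, v j ≤ 0 :=
      Finset.sum_nonpos (fun j _ => le_trans (hi0' j) h)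
    linarith
  have hV1 : V ≤ 1 := by
    have := Finset.single_le_sum (f := v) (fun j _ => hvnn j) (Finset.mem_univ i0)
    linarith
  have hap : ∀ j : Fin d, ∃ g ∈ gridG μ α N, v j / V ≤ g ∧ g ≤ (1 + μ) * (v j / V) + α :=
    fun j => grid_approx μ α hμ0 hα0 N hN (v j / V)
      (div_nonneg (hvnn j) hV0.le)
      (by rw [div_le_one hV0]; exact hi0' j)
  choose g hgG hgl hgu using hap
  set w' : Fin d → ℝ := fun j => if j = i0 then 1 else g j with hw'
  have hw'mem : w' ∈ Wgrid d μ α N := by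
    refine Set.mem_iUnion.2 ⟨i0, ?_, ?_⟩
    · simp [hw']
    · intro j hj
      simp only [hw', if_neg hj]
      exact hgG j
  have hwl : ∀ j, v j / V ≤ w' j := by
    intro j
    by_cases hj : j = i0
    · simp [hw', hj, div_self hV0.ne']; exact (div_le_one hV0).2 le_rfl
    · simp only [hw', if_neg hj]; exact hgl j
  have hwu : ∀ j, w' j ≤ (1 + μ) * (v j / V) + α := by
    intro j
    by_cases hj : j = i0
    · subst hj
      simp only [hw', if_pos rfl]
      rw [div_self hV0.ne']
      nlinarith
    · simp only [hw', if_neg hj]; exact hgu j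
  have hw'nn : ∀ j, 0 ≤ w' j := fun j =>
    le_trans (div_nonneg (hvnn j) hV0.le) (hwl j)
  set S := l1norm w' with hS
  have hSsum : S = ∑ j, w' j := by
    simp only [hS, l1norm]
    exact Finset.sum_congr rfl (fun j _ => abs_of_nonneg (hw'nn j))
  have hsumdiv : ∑ j, v j / V = 1 / V := by
    rw [← Finset.sum_div, hvsum]
  have hSl : 1 / V ≤ S := by
    rw [hSsum, ← hsumdiv]
    exact Finset.sum_le_sum (fun j _ => hwl j)
  have hSu : S ≤ (1 + μ) * (1 / V) + d * α := by
    rw [hSsum]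
    calc ∑ j, w' j ≤ ∑ j, ((1 + μ) * (v j / V) + α) :=
          Finset.sum_le_sum (fun j _ => hwu j)
      _ = (1 + μ) * (1 / V) + d * α := by
          rw [Finset.sum_add_distrib, ← Finset.mul_sum, hsumdiv]
          simp [mul_comm]
  have hS0 : 0 < S := lt_of_lt_of_le (by positivity) hSl
  have hVV : V * (1 / V) = 1 := by field_simp
  have hVS1 : 1 ≤ V * S := by
    nlinarith [mul_le_mul_of_nonneg_left hSl hV0.le]
  have hVSu : V * S ≤ (1 + μ) + d * α * V := by
    have := mul_le_mul_of_nonneg_left hSu hV0.le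
    nlinarith
  refine ⟨fun i => w' i / S, ⟨w', hw'mem, rfl⟩, fun i => ?_⟩
  have hvi0 : 0 ≤ v i := hvnn i
  have hviV : v i ≤ V := hi0' i
  have hd1 : (1 : ℝ) ≤ (d : ℝ) := by exact_mod_cast hd
  have hwli : v i ≤ V * w' i := by
    have := hwl i
    rw [div_le_iff₀ hV0] at this
    linarith [this]
  have hwui : V * w' i ≤ (1 + μ) * v i + α * V := by
    have h1 := hwu i
    have h2 := mul_le_mul_of_nonneg_left h1 hV0.le
    have h3 : V * ((1 + μ) * (v i / V)) = (1 + μ) * v i := by field_simp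
    nlinarith
  set t := w' i / S with htdef
  have ht : t * S = w' i := div_mul_cancel₀ _ hS0.ne'
  have ht0 : 0 ≤ t := div_nonneg (hw'nn i) hS0.le
  clear_value t S w' V
  clear hw'mem hS hw' hgG hgl hgu hSsum hsumdiv hSl hSu hwl hwu hV
  rw [abs_sub_le_iff]
  constructor
  · -- t - v i ≤ μ * v i + d * α
    have key : t ≤ t * (V * S) := by nlinarith
    have : t * (V * S) = V * w' i := by rw [show t * (V * S) = V * (t * S) by ring, ht]
    nlinarith
  · -- v i - t ≤ μ * v i + d * α
    have hVS0 : 0 < V * S := mul_pos hV0 hS0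
    have key : t * (V * S) = V * w' i := by rw [show t * (V * S) = V * (t * S) by ring, ht]
    -- (v i - t) * (V*S) ≤ (μ v i + dα) * (V*S)
    have h1 : (v i - t) * (V * S) ≤ (μ * v i + d * α) * (V * S) := by
      have h2 := mul_le_mul_of_nonneg_left hVSu hvi0
      have h3 : v i * V ≤ 1 := by nlinarith [mul_le_mul_of_nonneg_right hviV hV0.le]
      have hd0 : (0:ℝ) ≤ (d:ℝ) := le_trans zero_le_one hd1
      have e1 : μ * v i ≤ μ * v i * (V * S) :=
        le_mul_of_one_le_right (mul_nonneg hμ0.le hvi0) hVS1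
      have e2 : (d:ℝ) * α * (v i * V) ≤ (d:ℝ) * α :=
        mul_le_of_le_one_right (mul_nonneg hd0 hα0.le) h3
      have e3 : (d:ℝ) * α ≤ (d:ℝ) * α * (V * S) :=
        le_mul_of_one_le_right (mul_nonneg hd0 hα0.le) hVS1
      linarith [key, hwli, h2, e1, e2, e3]
    have := (mul_le_mul_iff_of_pos_right hVS0).mp h1
    linarith
end

section
/- Let d ≥ 1, μ ∈ (0,1], α ∈ (0,1], and let N be a natural number with α·(1 + μ)^N = 1. Then the set W' has cardinality at most d·(2 + N)^{d−1}, and moreover |W'| ≤ d·(2 + (2/μ)·log(1/α))^{d−1}. -/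
theorem stmt_10 {d : ℕ} (hd : 1 ≤ d)
    (μ α : ℝ) (hμ : 0 < μ ∧ μ ≤ 1) (hα : 0 < α ∧ α ≤ 1)
    (N : ℕ) (hN : α * (1 + μ) ^ N = 1) :
    (Wgrid d μ α N).ncard ≤ d * (2 + N) ^ (d - 1) ∧
    ((Wgrid d μ α N).ncard : ℝ) ≤
      (d : ℝ) * (2 + (2 / μ) * Real.log (1 / α)) ^ ((d : ℝ) - 1) := by
  obtain ⟨hμ0, hμ1⟩ := hμ
  obtain ⟨hα0, hα1⟩ := hα
  set Gfin : Finset ℝ :=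
    insert 0 ((Finset.range (N+1)).image (fun k => α * (1+μ)^k)) with hGfin
  have hGsub : gridG μ α N ⊆ ↑Gfin := by
    rintro x (rfl | ⟨k, hk, rfl⟩)
    · exact Finset.mem_insert_self _ _
    · exact Finset.mem_insert_of_mem
        (Finset.mem_image.2 ⟨k, Finset.mem_range.2 (Nat.lt_succ_of_le hk), rfl⟩)
  have hGcard : Gfin.card ≤ N + 2 := by
    calc Gfin.card ≤ ((Finset.range (N+1)).image (fun k => α * (1+μ)^k)).card + 1 :=
          Finset.card_insert_le _ _
    _ ≤ (N + 1) + 1 := by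
        have := Finset.card_image_le (s := Finset.range (N+1)) (f := fun k => α * (1+μ)^k)
        simpa using this
    _ = N + 2 := by ring
  set P : Fin d → Finset (Fin d → ℝ) :=
    fun i => Fintype.piFinset (fun j => if j = i then ({1} : Finset ℝ) else Gfin) with hP
  have hW : Wgrid d μ α N ⊆ ↑(Finset.univ.biUnion P) := by
    intro w hw
    obtain ⟨i, hwi, hwj⟩ : ∃ i, w i = 1 ∧ ∀ j, j ≠ i → w j ∈ gridG μ α N := by
      simpa [Wgrid, Set.mem_iUnion] using hw
    simp only [Finset.coe_biUnion, Set.mem_iUnion, Finset.mem_coe]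
    refine ⟨i, Finset.mem_univ i, ?_⟩
    rw [hP, Fintype.mem_piFinset]
    intro j
    by_cases h : j = i
    · subst h; simp [hwi]
    · simp only [if_neg h]
      exact hGsub (hwj j h)
  have hPcard : ∀ i, (P i).card ≤ (N + 2) ^ (d - 1) := by
    intro i
    rw [hP, Fintype.card_piFinset]
    rw [← Finset.mul_prod_erase Finset.univ _ (Finset.mem_univ i)]
    simp only [if_pos rfl, ite_true, Finset.card_singleton, one_mul]
    have h1 : ∏ j ∈ Finset.univ.erase i,
        (if j = i then ({1} : Finset ℝ) else Gfin).card
        = ∏ j ∈ Finset.univ.erase i, Gfin.card := by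
      refine Finset.prod_congr rfl fun j hj => ?_
      rw [if_neg (Finset.mem_erase.1 hj).1]
    rw [h1, Finset.prod_const]
    have h2 : (Finset.univ.erase i).card = d - 1 := by
      rw [Finset.card_erase_of_mem (Finset.mem_univ i)]
      simp
    rw [h2]
    exact Nat.pow_le_pow_left hGcard _
  have hmain : (Wgrid d μ α N).ncard ≤ d * (2 + N) ^ (d - 1) := by
    calc (Wgrid d μ α N).ncard ≤ (Finset.univ.biUnion P).card := by
          rw [← Set.ncard_coe_finset]
          exact Set.ncard_le_ncard hW (Finset.finite_toSet _)
    _ ≤ ∑ i : Fin d, (P i).card := Finset.card_biUnion_le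
    _ ≤ ∑ _i : Fin d, (N + 2) ^ (d - 1) := Finset.sum_le_sum fun i _ => hPcard i
    _ = d * (2 + N) ^ (d - 1) := by
        rw [Finset.sum_const, Finset.card_univ, Fintype.card_fin, smul_eq_mul,
          Nat.add_comm N 2]
  refine ⟨hmain, ?_⟩
  -- Now the real bound
  have hμpos : (0:ℝ) < 1 + μ := by linarith
  have hpow : (1 + μ) ^ N = 1 / α := by
    field_simp
    linarith [hN]
  have hexp : Real.exp (μ/2) ≤ 1 + μ := by
    have h2 := Real.add_one_le_exp (-(μ/2))
    have hef : Real.exp (μ/2) * Real.exp (-(μ/2)) = 1 := by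
      rw [← Real.exp_add]; ring_nf; exact Real.exp_zero
    nlinarith [Real.exp_pos (μ/2), Real.exp_pos (-(μ/2))]
  have hlog1 : μ/2 ≤ Real.log (1 + μ) :=
    (Real.le_log_iff_exp_le hμpos).2 hexp
  have hlogα : Real.log (1/α) = N * Real.log (1 + μ) := by
    rw [← hpow, Real.log_pow]
  have hNle : (N : ℝ) ≤ (2/μ) * Real.log (1/α) := by
    rw [hlogα]
    rw [div_mul_eq_mul_div, le_div_iff₀ hμ0]
    nlinarith [hlog1, Nat.cast_nonneg (α := ℝ) N]
  have hlognn : 0 ≤ Real.log (1/α) := by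
    apply Real.log_nonneg
    rw [le_div_iff₀ hα0]; linarith
  have hexpnn : (0:ℝ) ≤ (d:ℝ) - 1 := by
    have : (1:ℝ) ≤ d := by exact_mod_cast hd
    linarith
  have hcast : ((Wgrid d μ α N).ncard : ℝ) ≤ (d:ℝ) * ((2 + N : ℝ)) ^ ((d:ℝ) - 1) := by
    have h1 : ((Wgrid d μ α N).ncard : ℝ) ≤ (d:ℝ) * ((2 + N : ℝ)) ^ ((d - 1 : ℕ)) := by
      exact_mod_cast hmain
    have h2 : ((2 + N : ℝ)) ^ ((d - 1 : ℕ)) = ((2 + N : ℝ)) ^ ((d:ℝ) - 1) := by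
      rw [← Real.rpow_natCast (2 + N : ℝ) (d - 1)]
      congr 1
      rw [Nat.cast_sub hd]; simp
    rw [← h2]; exact h1
  calc ((Wgrid d μ α N).ncard : ℝ) ≤ (d:ℝ) * ((2 + N : ℝ)) ^ ((d:ℝ) - 1) := hcast
  _ ≤ (d : ℝ) * (2 + (2 / μ) * Real.log (1 / α)) ^ ((d : ℝ) - 1) := by
      gcongr
end
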